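/- arXiv:2003.13943 — 6 statements merged into one kernel-verified Lean document; each statement's English description precedes it below -/
import Mathlib

section
/- Let φ(z) = (z²−1) z^{N−1} Φ(z+z⁻¹) and ψ(z) = z^N Ψ(z+z⁻¹) be monic integer polynomials of degree 2N, where Φ has degree N−1 and Ψ has degree N. Then Res(φ, ψ) = (−1)^N · Ψ(2) · Ψ(−2) · Res(Φ, Ψ)². -/
/-!
Over an algebraically closed field, write `Φ = ∏ (w - wᵢ)`. Since
`z (z + z⁻¹ - w) = z² - w z + 1`, the identity for `φ` gives
`φ = (z - 1)(z + 1) ∏ᵢ (z² - wᵢ z + 1)`, so the roots of `φ` are `±1` together with, for each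
root `wᵢ` of `Φ`, the two roots `a, a⁻¹` of `z² - wᵢ z + 1`. At `z = ±1` we get
`ψ(1) = Ψ(2)` and `ψ(-1) = (-1)^N Ψ(-2)`, and each pair contributes
`ψ(a) ψ(a⁻¹) = Ψ(wᵢ)²`.
-/

open Polynomial

noncomputable def res (f g : Polynomial ℤ) : ℂ :=
  (((f.map (Int.castRingHom ℂ)).roots).map fun a => Polynomial.aeval a g).prod

section TraceQuadratic

variable {K : Type*} [Field K]

noncomputable def traceQuadratic (w : K) : K[X] := X ^ 2 - C w * X + 1

lemma traceQuadratic_monic (w : K) : (traceQuadratic w).Monic := by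
  unfold traceQuadratic; monicity!

lemma natDegree_traceQuadratic (w : K) : (traceQuadratic w).natDegree = 2 := by
  unfold traceQuadratic; compute_degree!

lemma eval_traceQuadratic {z : K} (hz : z ≠ 0) (w : K) :
    (traceQuadratic w).eval z = z * (z + z⁻¹ - w) := by
  simp only [traceQuadratic, eval_add, eval_sub, eval_pow, eval_mul, eval_X, eval_C, eval_one]
  field_simp
  ring

lemma ne_zero_of_mem_roots_traceQuadratic {w a : K} (ha : a ∈ (traceQuadratic w).roots) :
    a ≠ 0 := by
  rintro rfl
  simpa [traceQuadratic] using isRoot_of_mem_roots ha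

lemma add_inv_of_mem_roots_traceQuadratic {w a : K} (ha : a ∈ (traceQuadratic w).roots) :
    a + a⁻¹ = w := by
  have ha0 := ne_zero_of_mem_roots_traceQuadratic ha
  have hroot : a * (a + a⁻¹ - w) = 0 := by
    rw [← eval_traceQuadratic ha0]; exact isRoot_of_mem_roots ha
  exact sub_eq_zero.mp ((mul_eq_zero.mp hroot).resolve_left ha0)

variable [IsAlgClosed K]

lemma card_roots_traceQuadratic (w : K) : (traceQuadratic w).roots.card = 2 := by
  rw [IsAlgClosed.card_roots_eq_natDegree, natDegree_traceQuadratic]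

lemma prod_roots_traceQuadratic (w : K) : (traceQuadratic w).roots.prod = 1 := by
  have h := (IsAlgClosed.splits (traceQuadratic w)).coeff_zero_eq_prod_roots_of_monic
    (traceQuadratic_monic w)
  rw [natDegree_traceQuadratic, show (traceQuadratic w).coeff 0 = 1 by simp [traceQuadratic]] at h
  simpa using h.symm

lemma eval_prod_map_traceQuadratic_roots {F : K[X]} (hF : F.Monic) {z : K} (hz : z ≠ 0) :
    (F.roots.map traceQuadratic).prod.eval z = z ^ F.natDegree * F.eval (z + z⁻¹) := by
  rw [← IsAlgClosed.card_roots_eq_natDegree]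
  conv_rhs => enter [2]; rw [(IsAlgClosed.splits F).eq_prod_roots_of_monic hF]
  simp only [eval_multiset_prod, Multiset.map_map, Function.comp_def, eval_sub, eval_X, eval_C,
    eval_traceQuadratic hz, Multiset.prod_map_mul, Multiset.map_const', Multiset.prod_replicate]

lemma eq_of_eval_eq_of_ne_zero {f g : K[X]} (h : ∀ z ≠ 0, f.eval z = g.eval z) : f = g :=
  eq_of_infinite_eval_eq f g ((Set.finite_singleton 0).infinite_compl.mono fun z hz => h z hz)

theorem roots_eq_of_eval_eq_antipalindromic {f F : K[X]} (hF : F.Monic)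
    (hf : ∀ z ≠ 0, f.eval z = (z ^ 2 - 1) * z ^ F.natDegree * F.eval (z + z⁻¹)) :
    f.roots = 1 ::ₘ (-1) ::ₘ F.roots.bind fun w => (traceQuadratic w).roots := by
  have hfactor : f = (X - C 1) * (X - C (-1)) * (F.roots.map traceQuadratic).prod :=
    eq_of_eval_eq_of_ne_zero fun z hz => by
      rw [hf z hz, eval_mul, eval_prod_map_traceQuadratic_roots hF hz]
      simp only [eval_mul, eval_sub, eval_X, eval_C]
      ring
  have hq : (0 : K[X]) ∉ F.roots.map traceQuadratic := by
    simpa only [Multiset.mem_map, not_exists, not_and] using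
      fun w _ => (traceQuadratic_monic w).ne_zero
  have hlin : (X - C 1) * (X - C (-1)) ≠ (0 : K[X]) :=
    mul_ne_zero (X_sub_C_ne_zero 1) (X_sub_C_ne_zero (-1))
  rw [hfactor, roots_mul (mul_ne_zero hlin (Multiset.prod_ne_zero hq)), roots_mul hlin,
    roots_X_sub_C, roots_X_sub_C, roots_multiset_prod _ hq, Multiset.bind_map, add_assoc,
    Multiset.singleton_add, Multiset.singleton_add]

/-- The roots of `X² - w X + 1` are `a, a⁻¹`, so the powers `a ^ n` cancel. -/
theorem prod_map_eval_roots_traceQuadratic {g G : K[X]} {n : ℕ}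
    (hg : ∀ z ≠ 0, g.eval z = z ^ n * G.eval (z + z⁻¹)) (w : K) :
    ((traceQuadratic w).roots.map g.eval).prod = G.eval w ^ 2 := by
  have hmap : (traceQuadratic w).roots.map g.eval =
      (traceQuadratic w).roots.map fun a => a ^ n * G.eval w :=
    Multiset.map_congr rfl fun a ha => by
      rw [hg a (ne_zero_of_mem_roots_traceQuadratic ha), add_inv_of_mem_roots_traceQuadratic ha]
  rw [hmap, Multiset.prod_map_mul, Multiset.prod_map_pow, Multiset.map_id',
    prod_roots_traceQuadratic, one_pow, one_mul, Multiset.map_const', Multiset.prod_replicate,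
    card_roots_traceQuadratic]

end TraceQuadratic

theorem stmt_3_general (N : ℕ) (φ ψ Φ Ψ : Polynomial ℤ)
    (hΦm : Φ.Monic) (hΦd : Φ.natDegree = N - 1)
    (hφ : ∀ z : ℂ, z ≠ 0 →
      Polynomial.aeval z φ = (z ^ 2 - 1) * z ^ (N - 1) * Polynomial.aeval (z + z⁻¹) Φ)
    (hψ : ∀ z : ℂ, z ≠ 0 → Polynomial.aeval z ψ = z ^ N * Polynomial.aeval (z + z⁻¹) Ψ) :
    res φ ψ = (-1) ^ N * ((Ψ.eval 2 : ℤ) : ℂ) * ((Ψ.eval (-2) : ℤ) : ℂ) * (res Φ Ψ) ^ 2 := by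
  set ι := Int.castRingHom ℂ
  have aeval_eq (p : ℤ[X]) (z : ℂ) : aeval z p = (p.map ι).eval z := by
    rw [← eval_map_algebraMap, algebraMap_int_eq]
  have hf (z : ℂ) (hz : z ≠ 0) : (φ.map ι).eval z =
      (z ^ 2 - 1) * z ^ (Φ.map ι).natDegree * (Φ.map ι).eval (z + z⁻¹) := by
    rw [hΦm.natDegree_map, hΦd, ← aeval_eq, ← aeval_eq, hφ z hz]
  have hg (z : ℂ) (hz : z ≠ 0) : (ψ.map ι).eval z = z ^ N * (Ψ.map ι).eval (z + z⁻¹) := by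
    rw [← aeval_eq, ← aeval_eq, hψ z hz]
  simp only [res, aeval_eq]
  rw [roots_eq_of_eval_eq_antipalindromic (hΦm.map ι) hf, Multiset.map_cons, Multiset.map_cons,
    Multiset.prod_cons, Multiset.prod_cons, Multiset.map_bind, Multiset.prod_bind]
  simp only [prod_map_eval_roots_traceQuadratic hg, Multiset.prod_map_pow]
  have htwo : (1 : ℂ) + 1⁻¹ = ((2 : ℤ) : ℂ) := by norm_num
  have hmtwo : (-1 : ℂ) + (-1)⁻¹ = ((-2 : ℤ) : ℂ) := by norm_num
  rw [hg 1 one_ne_zero, hg (-1) (neg_ne_zero.mpr one_ne_zero), htwo, hmtwo, eval_intCast_map,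
    eval_intCast_map, Int.cast_id, Int.cast_id, one_pow, eq_intCast, eq_intCast]
  ring

/-- For φ(z) = (z²−1) z^{N−1} Φ(z+z⁻¹) and ψ(z) = z^N Ψ(z+z⁻¹) of degree 2N,
Res(φ, ψ) = (−1)^N · Ψ(2) · Ψ(−2) · Res(Φ, Ψ)². -/
theorem stmt_3 (N : ℕ) (hN : 0 < N) (φ ψ Φ Ψ : Polynomial ℤ)
    (hφm : φ.Monic) (hψm : ψ.Monic) (hΦm : Φ.Monic) (hΨm : Ψ.Monic)
    (hφd : φ.natDegree = 2 * N) (hψd : ψ.natDegree = 2 * N)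
    (hΦd : Φ.natDegree = N - 1) (hΨd : Ψ.natDegree = N)
    (hφ : ∀ z : ℂ, z ≠ 0 →
      Polynomial.aeval z φ = (z ^ 2 - 1) * z ^ (N - 1) * Polynomial.aeval (z + z⁻¹) Φ)
    (hψ : ∀ z : ℂ, z ≠ 0 → Polynomial.aeval z ψ = z ^ N * Polynomial.aeval (z + z⁻¹) Ψ) :
    res φ ψ = (-1) ^ N * ((Ψ.eval 2 : ℤ) : ℂ) * ((Ψ.eval (-2) : ℤ) : ℂ) * (res Φ Ψ) ^ 2 :=
  stmt_3_general N φ ψ Φ Ψ hΦm hΦd hφ hψ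
end

section
/- Let φ(z) = (z−1) z^N Φ(z+z⁻¹) and ψ(z) = (z+1) z^N Ψ(z+z⁻¹) be monic integer polynomials of odd degree 2N+1, where Φ and Ψ have degree N. Then Res(φ, ψ) = 2(−1)^N · Ψ(2) · Φ(−2) · Res(Φ, Ψ)². -/
/-!
Put `w = z + z⁻¹`. Each root `w` of `Φ` gives the two roots `a, a⁻¹` of `z² - w z + 1`, and
`φ(z) = (z - 1) ∏_w (z² - w z + 1)`, so the roots of `φ` are `1` and these pairs. On a pair,
`ψ(a) ψ(a⁻¹) = (a + 1)(a⁻¹ + 1) Ψ(w)² = (w + 2) Ψ(w)²`; moreover `ψ(1) = 2 Ψ(2)` and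
`∏_w (w + 2) = (-1)^N Φ(-2)`.
-/

open Polynomial

namespace Polynomial

variable {K : Type*} [Field K]

/-- Its roots are the `z` with `z + z⁻¹ = w`. -/
noncomputable def traceQuadratic (w : K) : K[X] := X ^ 2 - C w * X + 1

theorem monic_traceQuadratic (w : K) : (traceQuadratic w).Monic := by
  unfold traceQuadratic; monicity!

theorem natDegree_traceQuadratic (w : K) : (traceQuadratic w).natDegree = 2 := by
  unfold traceQuadratic; compute_degree!

theorem eval_traceQuadratic {z : K} (hz : z ≠ 0) (w : K) :
    (traceQuadratic w).eval z = z * (z + z⁻¹ - w) := by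
  simp only [traceQuadratic, eval_add, eval_sub, eval_mul, eval_pow, eval_C, eval_X, eval_one]
  field_simp
  ring

theorem exists_roots_traceQuadratic [IsAlgClosed K] (w : K) :
    ∃ a b, (traceQuadratic w).roots = {a, b} ∧ a * b = 1 ∧ a + b = w := by
  have hsplit := IsAlgClosed.splits (traceQuadratic w)
  obtain ⟨a, b, hab⟩ := Multiset.card_eq_two.mp <|
    hsplit.natDegree_eq_card_roots.symm.trans (natDegree_traceQuadratic w)
  have hfactor : traceQuadratic w = (X - C a) * (X - C b) := by
    rw [hsplit.eq_prod_roots_of_monic (monic_traceQuadratic w), hab]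
    simp
  have h0 := congrArg (eval 0) hfactor
  have h1 := congrArg (eval 1) hfactor
  simp only [traceQuadratic, eval_add, eval_sub, eval_mul, eval_pow, eval_C, eval_X,
    eval_one] at h0 h1
  exact ⟨a, b, hab, by linear_combination -h0, by linear_combination h1 - h0⟩

theorem eval_prod_traceQuadratic {z : K} (hz : z ≠ 0) (W : Multiset K) :
    ((W.map traceQuadratic).prod).eval z = z ^ W.card * (W.map (z + z⁻¹ - ·)).prod := by
  simp [eval_multiset_prod, eval_traceQuadratic hz, Multiset.prod_map_mul]

theorem eq_X_sub_one_mul_prod_traceQuadratic [Infinite K] {f : K[X]} {W : Multiset K}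
    (hf : ∀ z ≠ 0, f.eval z = (z - 1) * z ^ W.card * (W.map (z + z⁻¹ - ·)).prod) :
    f = (X - 1) * (W.map traceQuadratic).prod := by
  refine eq_of_infinite_eval_eq _ _ ((Set.finite_singleton 0).infinite_compl.mono fun z hz => ?_)
  simp [hf z hz, eval_prod_traceQuadratic hz, mul_assoc]

theorem roots_X_sub_one_mul_prod_traceQuadratic (W : Multiset K) :
    ((X - 1) * (W.map traceQuadratic).prod).roots =
      1 ::ₘ W.bind fun w => (traceQuadratic w).roots := by
  have hne : (0 : K[X]) ∉ W.map traceQuadratic := by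
    simpa using fun w _ => (monic_traceQuadratic w).ne_zero
  have hmonic : ((W.map traceQuadratic).prod).Monic :=
    monic_multiset_prod_of_monic _ _ fun w _ => monic_traceQuadratic w
  rw [← C_1, roots_mul ((monic_X_sub_C 1).mul hmonic).ne_zero, roots_X_sub_C,
    roots_multiset_prod _ hne, Multiset.bind_map, Multiset.singleton_add]

theorem prod_map_roots_traceQuadratic [IsAlgClosed K] {f F : K → K} {N : ℕ}
    (hf : ∀ z ≠ 0, f z = (z + 1) * z ^ N * F (z + z⁻¹)) (w : K) :
    ((traceQuadratic w).roots.map f).prod = (w + 2) * F w ^ 2 := by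
  obtain ⟨a, b, hroots, hab, hsum⟩ := exists_roots_traceQuadratic w
  have ha : a + a⁻¹ = w := by rw [← hsum, inv_eq_of_mul_eq_one_right hab]
  have hb : b + b⁻¹ = w := by rw [← hsum, inv_eq_of_mul_eq_one_left hab, add_comm]
  rw [hroots, Multiset.insert_eq_cons, Multiset.map_cons, Multiset.map_singleton,
    Multiset.prod_cons, Multiset.prod_singleton, hf a (left_ne_zero_of_mul_eq_one hab),
    hf b (right_ne_zero_of_mul_eq_one hab), ha, hb]
  calc (a + 1) * a ^ N * F w * ((b + 1) * b ^ N * F w)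
      = (a * b + (a + b) + 1) * (a * b) ^ N * F w ^ 2 := by ring
    _ = (w + 2) * F w ^ 2 := by rw [hab, hsum, one_pow]; ring

theorem prod_map_roots_add_two [IsAlgClosed K] {Φ : K[X]} (hΦ : Φ.Monic) :
    (Φ.roots.map (· + 2)).prod = (-1) ^ Φ.natDegree * Φ.eval (-2) := by
  have hsplit := IsAlgClosed.splits Φ
  have hneg : Φ.roots.map (-2 - ·) = (Φ.roots.map (· + 2)).map Neg.neg := by
    rw [Multiset.map_map]
    exact Multiset.map_congr rfl fun x _ => by simp only [Function.comp_apply]; ring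
  rw [hsplit.eval_eq_prod_roots_of_monic hΦ, hsplit.natDegree_eq_card_roots, hneg,
    Multiset.prod_map_neg, Multiset.card_map, ← mul_assoc, ← pow_add,
    Even.neg_one_pow ⟨_, rfl⟩, one_mul]

theorem prod_map_roots_of_eval_trace [IsAlgClosed K] {φ Φ : K[X]} (hΦ : Φ.Monic)
    (hφ : ∀ z ≠ 0, φ.eval z = (z - 1) * z ^ Φ.natDegree * Φ.eval (z + z⁻¹))
    {f F : K → K} (hf : ∀ z ≠ 0, f z = (z + 1) * z ^ Φ.natDegree * F (z + z⁻¹)) :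
    (φ.roots.map f).prod =
      2 * (-1) ^ Φ.natDegree * F 2 * Φ.eval (-2) * (Φ.roots.map F).prod ^ 2 := by
  have hsplit := IsAlgClosed.splits Φ
  have hfactor : φ = (X - 1) * (Φ.roots.map traceQuadratic).prod :=
    eq_X_sub_one_mul_prod_traceQuadratic fun z hz => by
      rw [hφ z hz, hsplit.eval_eq_prod_roots_of_monic hΦ, hsplit.natDegree_eq_card_roots]
  rw [hfactor, roots_X_sub_one_mul_prod_traceQuadratic, Multiset.map_cons, Multiset.prod_cons,
    Multiset.map_bind, Multiset.prod_bind,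
    Multiset.map_congr rfl fun w _ => prod_map_roots_traceQuadratic hf w,
    Multiset.prod_map_mul, Multiset.prod_map_pow, prod_map_roots_add_two hΦ, hf 1 one_ne_zero]
  norm_num
  ring

end Polynomial

theorem stmt_4_general (N : ℕ) (φ ψ Φ Ψ : Polynomial ℤ)
    (hΦm : Φ.Monic)
    (hΦd : Φ.natDegree = N)
    (hφ : ∀ z : ℂ, z ≠ 0 →
      Polynomial.aeval z φ = (z - 1) * z ^ N * Polynomial.aeval (z + z⁻¹) Φ)
    (hψ : ∀ z : ℂ, z ≠ 0 →
      Polynomial.aeval z ψ = (z + 1) * z ^ N * Polynomial.aeval (z + z⁻¹) Ψ) :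
    res φ ψ = 2 * (-1) ^ N * ((Ψ.eval 2 : ℤ) : ℂ) * ((Φ.eval (-2) : ℤ) : ℂ) *
      (res Φ Ψ) ^ 2 := by
  have hΦd' : (Φ.map (Int.castRingHom ℂ)).natDegree = N := by rw [hΦm.natDegree_map, hΦd]
  have haeval (p : ℤ[X]) (z : ℂ) : aeval z p = (p.map (Int.castRingHom ℂ)).eval z := by
    rw [← algebraMap_int_eq, eval_map_algebraMap]
  have hcast (p : ℤ[X]) (n : ℤ) :
      (p.map (Int.castRingHom ℂ)).eval (n : ℂ) = ((p.eval n : ℤ) : ℂ) := by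
    rw [eval_intCast_map, eq_intCast, Int.cast_id]
  have hroots := prod_map_roots_of_eval_trace (hΦm.map (Int.castRingHom ℂ))
    (φ := φ.map (Int.castRingHom ℂ)) (f := fun z => aeval z ψ) (F := fun w => aeval w Ψ)
    (by simpa only [hΦd', ← haeval] using hφ) (by simpa only [hΦd'] using hψ)
  rw [res, res, hroots, hΦd', haeval Ψ, ← hcast Ψ 2, ← hcast Φ (-2)]
  push_cast
  rfl

/-- For φ(z) = (z−1) z^N Φ(z+z⁻¹) and ψ(z) = (z+1) z^N Ψ(z+z⁻¹) of odd
degree 2N+1, Res(φ, ψ) = 2(−1)^N · Ψ(2) · Φ(−2) · Res(Φ, Ψ)². -/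
theorem stmt_4 (N : ℕ) (φ ψ Φ Ψ : Polynomial ℤ)
    (hφm : φ.Monic) (hψm : ψ.Monic) (hΦm : Φ.Monic) (hΨm : Ψ.Monic)
    (hφd : φ.natDegree = 2 * N + 1) (hψd : ψ.natDegree = 2 * N + 1)
    (hΦd : Φ.natDegree = N) (hΨd : Ψ.natDegree = N)
    (hφ : ∀ z : ℂ, z ≠ 0 →
      Polynomial.aeval z φ = (z - 1) * z ^ N * Polynomial.aeval (z + z⁻¹) Φ)
    (hψ : ∀ z : ℂ, z ≠ 0 →
      Polynomial.aeval z ψ = (z + 1) * z ^ N * Polynomial.aeval (z + z⁻¹) Ψ) :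
    res φ ψ = 2 * (-1) ^ N * ((Ψ.eval 2 : ℤ) : ℂ) * ((Φ.eval (-2) : ℤ) : ℂ) *
      (res Φ Ψ) ^ 2 :=
  stmt_4_general N φ ψ Φ Ψ hΦm hΦd hφ hψ
end

section
/- For positive integers k > m ≥ 1, the resultant of the k-th and m-th cyclotomic trace polynomials CT_k and CT_m equals ±1 if and only if the ratio k/m is not a power of a prime (in particular if m does not divide k). -/
/-- `F` is the k-th cyclotomic trace polynomial: for k ≥ 3 it is the unique monic polynomial
of degree φ(k)/2 with C_k(z) = z^{φ(k)/2} F(z+z⁻¹); by convention CT₁(w) = w−2 and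
CT₂(w) = w+2 (coming from (z−1)² and (z+1)²). -/
def IsCycloTrace (k : ℕ) (F : Polynomial ℤ) : Prop :=
  if k = 1 then F = Polynomial.X - Polynomial.C 2
  else if k = 2 then F = Polynomial.X + Polynomial.C 2
  else F.Monic ∧ F.natDegree = Nat.totient k / 2 ∧
    ∀ z : ℂ, z ≠ 0 → Polynomial.aeval z (Polynomial.cyclotomic k ℤ) =
      z ^ (Nat.totient k / 2) * Polynomial.aeval (z + z⁻¹) F

/-!
For `k ≥ 3` the roots of `CT_k` are the numbers `ζ + ζ⁻¹`, `ζ` a primitive `k`-th root of unity,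
each coming from exactly two such `ζ`. Hence `Res(CT_k, CT_m)² = ∏_ζ CT_m(ζ + ζ⁻¹)`, and since
`z^a CT_m(z + z⁻¹) = Φ_m(z)^c` (with `c = 2` for `m ≤ 2`) while the primitive `k`-th roots multiply
to `1`, this is a positive power of `Res(Φ_k, Φ_m) = ∏_ζ Φ_m(ζ)`.

Apostol's value of `Res(Φ_k, Φ_m)` follows by strong induction on `m` from
`∏_{d ∣ m} Φ_d(ζ) = ζ^m - 1`: as `ζ` runs over the primitive `k`-th roots, `ζ^m` runs
`φ(k)/φ(e)` times over the primitive `e`-th roots, `e = k / gcd(k, m)`, so both sides multiply over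
`d ∣ m` to `Φ_e(1)^{φ(k)/φ(e)}`. As `Φ_n(1)` is `p` for `n = p^b` and `1` for every other `n ≥ 2`,
the resultant is `1` exactly when `k/m` is not a prime power.
-/

open Polynomial Finset
open scoped Nat

section PrimitiveRoots

variable {R M : Type*} [CommRing R] [IsDomain R] [CommMonoid M]

theorem IsPrimitiveRoot.prod_primitiveRoots_eq_prod_units {k : ℕ} [NeZero k] {ω : R}
    (hω : IsPrimitiveRoot ω k) (f : R → M) :
    ∏ ζ ∈ primitiveRoots k R, f ζ = ∏ u : (ZMod k)ˣ, f (ω ^ (u : ZMod k).val) := by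
  have hk : 0 < k := Nat.pos_of_neZero k
  symm
  refine prod_bij (fun u _ => ω ^ (u : ZMod k).val) (fun u _ => ?_) (fun u _ v _ huv => ?_)
    (fun ζ hζ => ?_) (fun _ _ => rfl)
  · exact (mem_primitiveRoots hk).2 (hω.pow_of_coprime _ (ZMod.val_coe_unit_coprime u))
  · exact Units.ext (ZMod.val_injective _ (hω.pow_inj (ZMod.val_lt _) (ZMod.val_lt _) huv))
  · obtain ⟨i, hik, hi, rfl⟩ := hω.isPrimitiveRoot_iff.1 ((mem_primitiveRoots hk).1 hζ)
    exact ⟨ZMod.unitOfCoprime i hi, mem_univ _, by simp [ZMod.val_natCast, Nat.mod_eq_of_lt hik]⟩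

theorem MonoidHom.prod_comp_of_surjective {G H : Type*} [Group G] [Group H] [Fintype G]
    [Fintype H] [DecidableEq H] (ψ : G →* H) (hψ : Function.Surjective ψ) (f : H → M) :
    ∏ u, f (ψ u) = (∏ v, f v) ^ (Fintype.card G / Fintype.card H) := by
  have hfiber (v : H) : #{u | ψ u = v} = #{u | ψ u = 1} :=
    MonoidHom.card_fiber_eq_of_mem_range ψ (hψ v) ⟨1, map_one ψ⟩
  have hcard : Fintype.card G = Fintype.card H * #{u | ψ u = 1} := by
    rw [← card_univ, card_eq_sum_card_fiberwise (t := univ) (fun u _ => mem_univ (ψ u)),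
      sum_congr rfl fun v _ => hfiber v, sum_const, card_univ, smul_eq_mul]
  rw [Finset.prod_comp, image_univ_of_surjective hψ, hcard,
    Nat.mul_div_cancel_left _ Fintype.card_pos, ← prod_pow]
  exact prod_congr rfl fun v _ => by rw [hfiber]

theorem IsPrimitiveRoot.prod_primitiveRoots_comp_pow {k m : ℕ} {ω : R}
    (hω : IsPrimitiveRoot ω k) (hk : k ≠ 0) (hm : m ≠ 0) (f : R → M) :
    ∏ ζ ∈ primitiveRoots k R, f (ζ ^ m) =
      (∏ η ∈ primitiveRoots (k / k.gcd m) R, f η) ^ (φ k / φ (k / k.gcd m)) := by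
  set e := k / k.gcd m
  have hek : e ∣ k := Nat.div_dvd_of_dvd (Nat.gcd_dvd_left k m)
  have : NeZero k := ⟨hk⟩
  have : NeZero e := ⟨fun he => hk (Nat.eq_zero_of_zero_dvd (he ▸ hek))⟩
  have hη : IsPrimitiveRoot (ω ^ m) e := by
    have := IsPrimitiveRoot.orderOf (ω ^ m)
    rwa [orderOf_pow' _ hm, ← hω.eq_orderOf] at this
  rw [hω.prod_primitiveRoots_eq_prod_units, hη.prod_primitiveRoots_eq_prod_units,
    ← ZMod.card_units_eq_totient k, ← ZMod.card_units_eq_totient e,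
    ← (ZMod.unitsMap hek).prod_comp_of_surjective (ZMod.unitsMap_surjective hek)]
  refine prod_congr rfl fun u _ => congrArg f ?_
  rw [ZMod.unitsMap_val, ZMod.cast_eq_val, ZMod.val_natCast, ← pow_mul, mul_comm, pow_mul,
    hη.eq_orderOf, pow_mod_orderOf]

theorem IsPrimitiveRoot.prod_primitiveRoots_eq_one {k : ℕ} {ω : R} (hω : IsPrimitiveRoot ω k)
    (hk : 2 < k) : ∏ ζ ∈ primitiveRoots k R, ζ = 1 := by
  have h := congrArg (eval 0) (cyclotomic_eq_prod_X_sub_primitiveRoots hω)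
  rw [← coeff_zero_eq_eval_zero, cyclotomic_coeff_zero R (by omega), eval_prod] at h
  simp only [eval_sub, eval_X, eval_C, zero_sub] at h
  rw [prod_neg, hω.card_primitiveRoots, (Nat.totient_even hk).neg_one_pow, one_mul] at h
  exact h.symm

end PrimitiveRoots

theorem eval_one_cyclotomic_of_not_isPrimePow {R : Type*} [Ring R] {n : ℕ} (hn : n ≠ 1)
    (h : ¬IsPrimePow n) : eval 1 (cyclotomic n R) = 1 := by
  refine eval_one_cyclotomic_not_prime_pow fun {p} hp b hnp => ?_
  rcases b with _ | b
  · exact hn (by simpa using hnp.symm)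
  · exact h ⟨p, b + 1, hp.prime, b.succ_pos, hnp⟩

theorem eval_one_cyclotomic_prime_pow' {R : Type*} [CommRing R] {p b : ℕ} (hp : p.Prime)
    (hb : b ≠ 0) : eval 1 (cyclotomic (p ^ b) R) = p := by
  have : Fact p.Prime := ⟨hp⟩
  obtain ⟨b, rfl⟩ := Nat.exists_eq_succ_of_ne_zero hb
  exact eval_one_cyclotomic_prime_pow b

theorem eval_one_cyclotomic_pos {n : ℕ} (hn : n ≠ 1) : 0 < eval 1 (cyclotomic n ℤ) := by
  by_cases h : IsPrimePow n
  · obtain ⟨p, b, hp, hb, rfl⟩ := h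
    rw [eval_one_cyclotomic_prime_pow' hp.nat_prime hb.ne']
    exact_mod_cast hp.nat_prime.pos
  · rw [eval_one_cyclotomic_of_not_isPrimePow hn h]
    exact one_pos

theorem totient_prime_pow_mul_div_totient {p b s t : ℕ} (hp : p.Prime) (hb : b ≠ 0)
    (ht : ¬p ∣ t) : φ (p ^ b * (p ^ s * t)) / φ (p ^ b) = p ^ s * φ t := by
  have hcop (j : ℕ) : (p ^ j).Coprime t := (hp.coprime_iff_not_dvd.2 ht).pow_left j
  refine Nat.div_eq_of_eq_mul_left (Nat.totient_pos.2 (pow_pos hp.pos b)) ?_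
  rw [← mul_assoc, ← pow_add, Nat.totient_mul (hcop _), Nat.totient_prime_pow hp (by omega),
    Nat.totient_prime_pow hp (Nat.pos_of_ne_zero hb), show b + s - 1 = s + (b - 1) by omega,
    pow_add]
  ring

theorem prod_divisors_eval_one_cyclotomic_prime_pow_mul {p b g : ℕ} (hp : p.Prime) (hb : b ≠ 0)
    (hg : g ≠ 0) :
    ∏ d ∈ g.divisors, eval 1 (cyclotomic (p ^ b * d) ℤ) ^ φ (g / d) =
      (p : ℤ) ^ (φ (p ^ b * g) / φ (p ^ b)) := by
  obtain ⟨s, t, hpt, rfl⟩ := Nat.exists_eq_pow_mul_and_not_dvd hg p hp.one_lt.ne'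
  have hcop (j : ℕ) : (p ^ j).Coprime t := (hp.coprime_iff_not_dvd.2 hpt).pow_left j
  rw [totient_prime_pow_mul_div_totient hp hb hpt,
    ← prod_filter_mul_prod_filter_not _ (· ∣ p ^ s), Nat.divisors_filter_dvd_of_dvd hg
      (dvd_mul_right _ _)]
  have hp_part : ∏ d ∈ (p ^ s).divisors, eval 1 (cyclotomic (p ^ b * d) ℤ) ^ φ (p ^ s * t / d) =
      (p : ℤ) ^ (p ^ s * φ t) := by
    have hsum : p ^ s * φ t = ∑ d ∈ (p ^ s).divisors, φ (p ^ s / d) * φ t := by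
      rw [← sum_mul, Nat.sum_div_divisors, Nat.sum_totient]
    rw [hsum, ← prod_pow_eq_pow_sum]
    refine prod_congr rfl fun d hd => ?_
    obtain ⟨j, -, rfl⟩ := (Nat.dvd_prime_pow hp).1 (Nat.dvd_of_mem_divisors hd)
    rw [← pow_add, eval_one_cyclotomic_prime_pow' hp (by omega), ← Nat.div_mul_right_comm
      (Nat.dvd_of_mem_divisors hd), Nat.totient_mul (Nat.Coprime.coprime_div_left (hcop s)
      (Nat.dvd_of_mem_divisors hd))]
  have hrest : ∏ d ∈ (p ^ s * t).divisors with ¬d ∣ p ^ s,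
      eval 1 (cyclotomic (p ^ b * d) ℤ) ^ φ (p ^ s * t / d) = 1 := by
    refine prod_eq_one fun d hd => ?_
    obtain ⟨hdg, hds⟩ := mem_filter.1 hd
    suffices ¬IsPrimePow (p ^ b * d) by
      have hpb : p ^ b ≠ 1 := (Nat.one_lt_pow hb hp.one_lt).ne'
      rw [eval_one_cyclotomic_of_not_isPrimePow (fun h => hpb (Nat.eq_one_of_mul_eq_one_right h))
        this, one_pow]
    rintro ⟨q, c, hq, -, hqc⟩
    obtain rfl : p = q := (Nat.prime_dvd_prime_iff_eq hp hq.nat_prime).1 <| hp.dvd_of_dvd_pow <|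
      hqc ▸ (dvd_pow_self p hb).mul_right d
    obtain ⟨j, -, rfl⟩ := (Nat.dvd_prime_pow hp).1 (hqc ▸ dvd_mul_left d (p ^ b))
    exact hds ((hcop j).dvd_of_dvd_mul_right (Nat.dvd_of_mem_divisors hdg))
  rw [hp_part, hrest, mul_one]

theorem prod_divisors_eval_one_cyclotomic_mul {e g : ℕ} (he : e ≠ 1) (hg : g ≠ 0) :
    ∏ d ∈ g.divisors, eval 1 (cyclotomic (e * d) ℤ) ^ φ (g / d) =
      eval 1 (cyclotomic e ℤ) ^ (φ (e * g) / φ e) := by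
  by_cases he' : IsPrimePow e
  · obtain ⟨p, b, hp, hb, rfl⟩ := he'
    rw [eval_one_cyclotomic_prime_pow' hp.nat_prime hb.ne']
    exact prod_divisors_eval_one_cyclotomic_prime_pow_mul hp.nat_prime hb.ne' hg
  · rw [eval_one_cyclotomic_of_not_isPrimePow he he', one_pow]
    refine prod_eq_one fun d _ => ?_
    have hed : e * d ≠ 1 := fun h => he (Nat.eq_one_of_mul_eq_one_right h)
    rw [eval_one_cyclotomic_of_not_isPrimePow hed fun h => he' (h.dvd (dvd_mul_right e d) he),
      one_pow]

/-- Apostol's value of `Res(Φ_k, Φ_m)`: `Φ_{k/m}(1)` is `p` when `k/m` is a power of the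
prime `p`. -/
noncomputable def apostolRes (k m : ℕ) : ℤ :=
  if m ∣ k then eval 1 (cyclotomic (k / m) ℤ) ^ φ m else 1

section Apostol

variable {k m : ℕ}

theorem Nat.div_ne_one_of_lt_of_dvd (hmk : m < k) (hd : m ∣ k) : k / m ≠ 1 := fun h => by
  rw [← Nat.mul_div_cancel' hd, h, mul_one] at hmk
  exact lt_irrefl m hmk

theorem apostolRes_pos (hmk : m < k) : 0 < apostolRes k m := by
  unfold apostolRes
  split_ifs with hd
  · exact pow_pos (eval_one_cyclotomic_pos (Nat.div_ne_one_of_lt_of_dvd hmk hd)) _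
  · exact one_pos

theorem apostolRes_eq_one_iff (hmk : m < k) :
    apostolRes k m = 1 ↔ ¬(m ∣ k ∧ IsPrimePow (k / m)) := by
  unfold apostolRes
  by_cases hd : m ∣ k
  · have hm : m ≠ 0 := by rintro rfl; exact (Nat.eq_zero_of_zero_dvd hd ▸ hmk).false
    by_cases hpp : IsPrimePow (k / m)
    · obtain ⟨p, b, hp, hb, hpb⟩ := hpp
      rw [if_pos hd, ← hpb, eval_one_cyclotomic_prime_pow' hp.nat_prime hb.ne',
        pow_eq_one_iff_of_nonneg (Int.natCast_nonneg p) (Nat.totient_pos.2 (by omega)).ne']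
      simp only [Nat.cast_eq_one, hp.nat_prime.ne_one, false_iff, not_not]
      exact ⟨hd, hpb ▸ hp.isPrimePow.pow hb.ne'⟩
    · simp [hd, hpp,
        eval_one_cyclotomic_of_not_isPrimePow (Nat.div_ne_one_of_lt_of_dvd hmk hd) hpp]
  · simp [hd]

theorem prod_divisors_apostolRes (hm : m ≠ 0) (hmk : m < k) :
    ∏ d ∈ m.divisors, apostolRes k d =
      eval 1 (cyclotomic (k / k.gcd m) ℤ) ^ (φ k / φ (k / k.gcd m)) := by
  set g := k.gcd m
  have hgk : g ∣ k := Nat.gcd_dvd_left k m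
  have hg : g ≠ 0 := Nat.gcd_ne_zero_right hm
  have hdiv : {d ∈ m.divisors | d ∣ k} = g.divisors := by
    rw [← Nat.divisors_filter_dvd_of_dvd hm (Nat.gcd_dvd_right k m)]
    exact filter_congr fun d hd => (Nat.dvd_gcd_iff.trans
      (and_iff_left (Nat.dvd_of_mem_divisors hd))).symm
  have hkd : ∀ d ∈ g.divisors, k / (g / d) = k / g * d := fun d hd => by
    have hdg := Nat.dvd_of_mem_divisors hd
    conv_lhs => rw [← Nat.div_mul_cancel hgk]
    rw [Nat.mul_div_assoc _ (Nat.div_dvd_of_dvd hdg), Nat.div_div_self hdg hg]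
  have hgm : g < k := (Nat.le_of_dvd (Nat.pos_of_ne_zero hm) (Nat.gcd_dvd_right k m)).trans_lt hmk
  simp only [apostolRes]
  rw [← prod_filter, hdiv,
    ← Nat.prod_div_divisors g fun d => eval 1 (cyclotomic (k / d) ℤ) ^ φ d,
    prod_congr rfl fun d hd => by rw [hkd d hd],
    prod_divisors_eval_one_cyclotomic_mul (Nat.div_ne_one_of_lt_of_dvd hgm hgk) hg,
    Nat.div_mul_cancel hgk]

end Apostol

theorem eq_of_prod_divisors_eq {M : Type*} [CommMonoidWithZero M] [IsCancelMulZero M]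
    [Nontrivial M] {f g : ℕ → M} {N : ℕ}
    (hg : ∀ n, n ≠ 0 → n < N → g n ≠ 0)
    (h : ∀ n, n ≠ 0 → n < N → ∏ d ∈ n.divisors, f d = ∏ d ∈ n.divisors, g d) :
    ∀ n, n ≠ 0 → n < N → f n = g n := by
  intro n
  induction n using Nat.strong_induction_on with
  | _ n ih =>
    intro hn hnN
    have hproper : ∀ d ∈ n.properDivisors, f d = g d := fun d hd => by
      obtain ⟨hdn, hlt⟩ := Nat.mem_properDivisors.1 hd
      exact ih d hlt (ne_zero_of_dvd_ne_zero hn hdn) (hlt.trans hnN)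
    have hne : ∏ d ∈ n.properDivisors, g d ≠ 0 := prod_ne_zero_iff.2 fun d hd => by
      obtain ⟨hdn, hlt⟩ := Nat.mem_properDivisors.1 hd
      exact hg d (ne_zero_of_dvd_ne_zero hn hdn) (hlt.trans hnN)
    have := h n hn hnN
    rw [← Nat.cons_self_properDivisors hn, prod_cons, prod_cons, prod_congr rfl hproper] at this
    exact mul_right_cancel₀ hne this

noncomputable def cyclotomicResultant (k m : ℕ) : ℂ :=
  ∏ ζ ∈ primitiveRoots k ℂ, eval ζ (cyclotomic m ℂ)

section CyclotomicResultant

variable {k m : ℕ}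

theorem prod_divisors_cyclotomicResultant (hk : 2 < k) (hm : m ≠ 0) :
    ∏ d ∈ m.divisors, cyclotomicResultant k d =
      ((eval 1 (cyclotomic (k / k.gcd m) ℤ) : ℤ) : ℂ) ^ (φ k / φ (k / k.gcd m)) := by
  have hω := Complex.isPrimitiveRoot_exp k (by omega)
  set e := k / k.gcd m
  have he : 0 < e :=
    Nat.div_pos (Nat.gcd_le_left m (by omega)) (Nat.gcd_pos_of_pos_left m (by omega))
  have hηe := Complex.isPrimitiveRoot_exp e he.ne'
  calc ∏ d ∈ m.divisors, cyclotomicResultant k d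
      = ∏ ζ ∈ primitiveRoots k ℂ, -(1 - ζ ^ m) := by
        simp only [cyclotomicResultant]
        rw [prod_comm]
        refine prod_congr rfl fun ζ _ => ?_
        rw [← eval_prod, prod_cyclotomic_eq_X_pow_sub_one (Nat.pos_of_ne_zero hm)]
        simp
    _ = ∏ ζ ∈ primitiveRoots k ℂ, (1 - ζ ^ m) := by
        rw [prod_neg, hω.card_primitiveRoots, (Nat.totient_even hk).neg_one_pow, one_mul]
    _ = (∏ η ∈ primitiveRoots e ℂ, (1 - η)) ^ (φ k / φ e) :=
        hω.prod_primitiveRoots_comp_pow (by omega) hm fun z => 1 - z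
    _ = _ := by
        have hcast : ((eval 1 (cyclotomic e ℤ) : ℤ) : ℂ) = eval 1 (cyclotomic e ℂ) := by
          rw [← map_cyclotomic_int e ℂ, eval_one_map]; rfl
        rw [hcast, cyclotomic_eq_prod_X_sub_primitiveRoots hηe, eval_prod]
        simp

theorem cyclotomicResultant_eq_apostolRes (hk : 2 < k) (hm : m ≠ 0) (hmk : m < k) :
    cyclotomicResultant k m = apostolRes k m := by
  refine eq_of_prod_divisors_eq (g := fun d => (apostolRes k d : ℂ))
    (fun d _ hd => Int.cast_ne_zero.2 (apostolRes_pos hd).ne') (fun d hd hdk => ?_) m hm hmk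
  rw [prod_divisors_cyclotomicResultant hk hd, ← Int.cast_prod, prod_divisors_apostolRes hd hdk,
    Int.cast_pow]

end CyclotomicResultant

section Trace

theorem add_inv_eq_add_inv_iff {K : Type*} [Field K] {ζ ξ : K} (hζ : ζ ≠ 0) (hξ : ξ ≠ 0) :
    ζ + ζ⁻¹ = ξ + ξ⁻¹ ↔ ζ = ξ ∨ ζ = ξ⁻¹ := by
  have key : (ζ - ξ) * (ζ - ξ⁻¹) = ζ * ((ζ + ζ⁻¹) - (ξ + ξ⁻¹)) := by
    field_simp
    ring
  rw [← sub_eq_zero, ← mul_right_inj' hζ, ← key, mul_zero, mul_eq_zero, sub_eq_zero, sub_eq_zero]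

variable {K : Type*} [Field K] [DecidableEq K] {k : ℕ}

theorem filter_primitiveRoots_add_inv_eq {ξ : K} (hξ : ξ ∈ primitiveRoots k K) :
    {ζ ∈ primitiveRoots k K | ζ + ζ⁻¹ = ξ + ξ⁻¹} = {ξ, ξ⁻¹} := by
  have hk : 0 < k := Nat.pos_of_ne_zero fun h => by simp [h] at hξ
  have hξ' := isPrimitiveRoot_of_mem_primitiveRoots hξ
  ext ζ
  simp only [mem_filter, mem_insert, mem_singleton]
  constructor
  · rintro ⟨hζ, h⟩
    exact (add_inv_eq_add_inv_iff ((isPrimitiveRoot_of_mem_primitiveRoots hζ).ne_zero hk.ne')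
      (hξ'.ne_zero hk.ne')).1 h
  · rintro (rfl | rfl)
    · exact ⟨hξ, rfl⟩
    · exact ⟨(mem_primitiveRoots hk).2 hξ'.inv, by rw [inv_inv, add_comm]⟩

theorem card_filter_primitiveRoots_add_inv_eq (hk : 2 < k) {w : K}
    (hw : w ∈ (primitiveRoots k K).image fun ζ => ζ + ζ⁻¹) :
    #{ζ ∈ primitiveRoots k K | ζ + ζ⁻¹ = w} = 2 := by
  obtain ⟨ξ, hξ, rfl⟩ := mem_image.1 hw
  have hξ' := isPrimitiveRoot_of_mem_primitiveRoots hξ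
  have hne : ξ ≠ ξ⁻¹ := fun h => by
    have : ξ ^ 2 = 1 := by
      rw [sq]; nth_rewrite 2 [h]; exact mul_inv_cancel₀ (hξ'.ne_zero (by omega))
    exact absurd (Nat.le_of_dvd two_pos ((hξ'.pow_eq_one_iff_dvd 2).1 this)) (by omega)
  rw [filter_primitiveRoots_add_inv_eq hξ, card_pair hne]

theorem card_image_primitiveRoots_add_inv {ω : K} (hω : IsPrimitiveRoot ω k) (hk : 2 < k) :
    #((primitiveRoots k K).image fun ζ => ζ + ζ⁻¹) = φ k / 2 := by
  have h := card_eq_sum_card_image (fun ζ : K => ζ + ζ⁻¹) (primitiveRoots k K)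
  rw [hω.card_primitiveRoots, sum_congr rfl fun w => card_filter_primitiveRoots_add_inv_eq hk,
    sum_const, smul_eq_mul] at h
  omega

end Trace

section CycloTrace

variable {k m : ℕ} {F G : ℤ[X]}

theorem IsCycloTrace.roots_map (hk : 2 < k) (hF : IsCycloTrace k F) :
    (F.map (Int.castRingHom ℂ)).roots = ((primitiveRoots k ℂ).image fun ζ => ζ + ζ⁻¹).val := by
  rw [IsCycloTrace, if_neg (by omega), if_neg (by omega)] at hF
  obtain ⟨hmon, hdeg, hval⟩ := hF
  have hω := Complex.isPrimitiveRoot_exp k (by omega)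
  refine roots_eq_of_natDegree_le_card_of_ne_zero (fun w hw => ?_) ?_ (hmon.map _).ne_zero
  · obtain ⟨ζ, hζ, rfl⟩ := mem_image.1 hw
    have hζ' := isPrimitiveRoot_of_mem_primitiveRoots hζ
    have hζ0 : ζ ≠ 0 := hζ'.ne_zero (by omega)
    have h := hval ζ hζ0
    rw [aeval_def, ← eval_map, algebraMap_int_eq, map_cyclotomic_int,
      (hζ'.isRoot_cyclotomic (by omega)).eq_zero, eq_comm, mul_eq_zero] at h
    rw [eval_map, ← algebraMap_int_eq, ← aeval_def]
    exact h.resolve_left (pow_ne_zero _ hζ0)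
  · rw [hmon.natDegree_map, hdeg, card_image_primitiveRoots_add_inv hω hk]

theorem sq_res_eq_prod (hk : 2 < k) (hF : IsCycloTrace k F) (G : ℤ[X]) :
    res F G ^ 2 = ∏ ζ ∈ primitiveRoots k ℂ, aeval (ζ + ζ⁻¹) G := by
  rw [res, hF.roots_map hk, ← prod_eq_multiset_prod, ← prod_pow,
    Finset.prod_comp (s := primitiveRoots k ℂ) (fun w => aeval w G) fun ζ => ζ + ζ⁻¹]
  exact prod_congr rfl fun w hw => by rw [card_filter_primitiveRoots_add_inv_eq hk hw]

theorem IsCycloTrace.exists_pow_mul_aeval_add_inv (hF : IsCycloTrace m F) :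
    ∃ a c : ℕ, c ≠ 0 ∧
      ∀ z : ℂ, z ≠ 0 → z ^ a * aeval (z + z⁻¹) F = eval z (cyclotomic m ℂ) ^ c := by
  unfold IsCycloTrace at hF
  split_ifs at hF with h1 h2
  · subst h1 hF
    refine ⟨1, 2, two_ne_zero, fun z hz => ?_⟩
    simp only [cyclotomic_one, map_sub, aeval_X, eval_sub, eval_X, eval_one,
      map_ofNat]
    field_simp
    ring
  · subst h2 hF
    refine ⟨1, 2, two_ne_zero, fun z hz => ?_⟩
    simp only [cyclotomic_two, map_add, aeval_X, eval_add, eval_X, eval_one,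
      map_ofNat]
    field_simp
    ring
  · refine ⟨φ m / 2, 1, one_ne_zero, fun z hz => ?_⟩
    rw [pow_one, ← hF.2.2 z hz, aeval_def, ← eval_map, algebraMap_int_eq, map_cyclotomic_int]

theorem sq_res_eq_cyclotomicResultant_pow (hk : 2 < k) (hFk : IsCycloTrace k F)
    (hG : IsCycloTrace m G) : ∃ c : ℕ, c ≠ 0 ∧ res F G ^ 2 = cyclotomicResultant k m ^ c := by
  obtain ⟨a, c, hc, h⟩ := hG.exists_pow_mul_aeval_add_inv
  have hω := Complex.isPrimitiveRoot_exp k (by omega)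
  refine ⟨c, hc, ?_⟩
  calc res F G ^ 2
      = (∏ ζ ∈ primitiveRoots k ℂ, ζ) ^ a * ∏ ζ ∈ primitiveRoots k ℂ, aeval (ζ + ζ⁻¹) G := by
        rw [sq_res_eq_prod hk hFk, hω.prod_primitiveRoots_eq_one hk, one_pow, one_mul]
    _ = cyclotomicResultant k m ^ c := by
        rw [cyclotomicResultant, ← prod_pow, ← prod_pow, ← prod_mul_distrib]
        exact prod_congr rfl fun ζ hζ =>
          h ζ ((isPrimitiveRoot_of_mem_primitiveRoots hζ).ne_zero (by omega))

end CycloTrace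

theorem res_X_sub_C (a : ℤ) (G : ℤ[X]) : res (X - C a) G = aeval (a : ℂ) G := by
  rw [res, Polynomial.map_sub, map_X, map_C, roots_X_sub_C, Multiset.map_singleton,
    Multiset.prod_singleton, eq_intCast]

/-- For k > m ≥ 1, Res(CT_k, CT_m) = ±1 if and only if k/m is not a prime
power (in particular if m ∤ k). -/
theorem stmt_5 (k m : ℕ) (hm : 1 ≤ m) (hkm : m < k)
    (Fk Fm : Polynomial ℤ) (hFk : IsCycloTrace k Fk) (hFm : IsCycloTrace m Fm) :
    (res Fk Fm = 1 ∨ res Fk Fm = -1) ↔ ¬ (m ∣ k ∧ IsPrimePow (k / m)) := by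
  rcases (show k = 2 ∨ 2 < k by omega) with rfl | hk
  · obtain rfl : m = 1 := by omega
    simp only [IsCycloTrace, if_pos, if_neg (show 2 ≠ 1 by norm_num)] at hFk hFm
    subst hFk hFm
    have hres : res (X + C 2) (X - C 2) = -4 := by
      rw [← sub_neg_eq_add, ← C_neg, res_X_sub_C, map_sub, aeval_X, aeval_C]
      norm_num
    rw [hres]
    norm_num [Nat.prime_two.isPrimePow]
  · obtain ⟨c, hc, hsq⟩ := sq_res_eq_cyclotomicResultant_pow hk hFk hFm
    rw [cyclotomicResultant_eq_apostolRes hk (by omega) hkm] at hsq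
    rw [← sq_eq_one_iff, hsq, ← apostolRes_eq_one_iff hkm, ← Int.cast_pow, Int.cast_eq_one,
      pow_eq_one_iff_of_nonneg (apostolRes_pos hkm).le hc]
end

section
/- Let A and B be invertible n×n complex matrices with rank(A−B) = 1, let C = A⁻¹B, and suppose C r = c·r with c ≠ 1 a complex number and r a nonzero vector such that C v = v − ζ(v,r)r for all v, with respect to a nondegenerate A-invariant and B-invariant Hermitian form (·,·), where ζ = (1−c)/(r,r). Then ψ(z)/φ(z) = 1 + ζ·((zI − A)⁻¹ A r, r) as rational functions, where φ and ψ are the characteristic polynomials of A and B. -/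
/-!
Writing the functional `v ↦ ζ (v, r)` as a dot product `s ⬝ᵥ v`, the reflection becomes
`A⁻¹ B = 1 - r sᵀ`, so `zI - B = (zI - A) + (A r) sᵀ` is a rank-one perturbation of `zI - A`, and
the matrix determinant lemma gives `ψ(z) = φ(z) (1 + sᵀ (zI - A)⁻¹ A r)`.
-/

open Matrix

namespace Matrix

variable {m R : Type*} [Fintype m] [DecidableEq m] [CommRing R]

theorem det_add_vecMulVec {Z : Matrix m m R} (hZ : IsUnit Z.det) (u v : m → R) :
    (Z + vecMulVec u v).det = Z.det * (1 + v ⬝ᵥ Z⁻¹ *ᵥ u) := by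
  have hfactor : Z + vecMulVec u v = Z * (1 + vecMulVec (Z⁻¹ *ᵥ u) v) := by
    rw [Matrix.mul_add, mul_one, mul_vecMulVec, mulVec_mulVec, mul_nonsing_inv _ hZ, one_mulVec]
  rw [hfactor, det_mul, vecMulVec_eq Unit, det_one_add_replicateCol_mul_replicateRow]

theorem eq_one_sub_vecMulVec_of_mulVec_eq {C : Matrix m m R} {r s : m → R}
    (hC : ∀ v, C *ᵥ v = v - (s ⬝ᵥ v) • r) : C = 1 - vecMulVec r s := by
  refine ext_iff_mulVec.2 fun v => ?_
  rw [hC, sub_mulVec, one_mulVec, vecMulVec_mulVec, op_smul_eq_smul]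

theorem eval_charpoly_mul_one_sub_vecMulVec (A : Matrix m m R) (r s : m → R) {z : R}
    (hz : IsUnit (A.charpoly.eval z)) :
    (A * (1 - vecMulVec r s)).charpoly.eval z =
      A.charpoly.eval z * (1 + s ⬝ᵥ (z • (1 : Matrix m m R) - A)⁻¹ *ᵥ A *ᵥ r) := by
  have hscalar : scalar m z = z • (1 : Matrix m m R) := by
    rw [scalar_apply, smul_one_eq_diagonal]
  rw [eval_charpoly, hscalar] at hz
  rw [eval_charpoly, eval_charpoly, hscalar]
  rw [← det_add_vecMulVec hz, Matrix.mul_sub, mul_one, mul_vecMulVec, sub_sub_eq_add_sub,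
    add_sub_right_comm]

end Matrix

theorem LinearMap.apply_eq_dotProduct {m R : Type*} [Fintype m] [DecidableEq m] [CommSemiring R]
    (f : Module.Dual R (m → R)) (v : m → R) :
    f v = (dotProductEquiv R m).symm f ⬝ᵥ v := by
  conv_lhs => rw [← (dotProductEquiv R m).apply_symm_apply f]
  rfl

theorem stmt_12_general (n : ℕ) (A B : Matrix (Fin n) (Fin n) ℂ)
    (hA : IsUnit A.det)
    (h : (Fin n → ℂ) → (Fin n → ℂ) → ℂ)
    (hadd1 : ∀ u u' v, h (u + u') v = h u v + h u' v)
    (hsmul1 : ∀ (a : ℂ) (u v), h (a • u) v = a * h u v)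
    (r : Fin n → ℂ)
    (ζ : ℂ)
    (hrefl : ∀ v, (A⁻¹ * B).mulVec v = v - (ζ * h v r) • r) :
    ∀ z : ℂ, A.charpoly.eval z ≠ 0 →
      B.charpoly.eval z / A.charpoly.eval z =
        1 + ζ * h ((z • (1 : Matrix (Fin n) (Fin n) ℂ) - A)⁻¹.mulVec (A.mulVec r)) r := by
  intro z hz
  let L : Module.Dual ℂ (Fin n → ℂ) :=
    { toFun v := ζ * h v r
      map_add' u u' := by simp only [hadd1, mul_add]
      map_smul' a u := by simp only [hsmul1, RingHom.id_apply, smul_eq_mul]; ring }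
  set s := (dotProductEquiv ℂ (Fin n)).symm L
  have hL : ∀ v, ζ * h v r = s ⬝ᵥ v := L.apply_eq_dotProduct
  have hB : B = A * (1 - vecMulVec r s) := by
    rw [← eq_one_sub_vecMulVec_of_mulVec_eq fun v => (hrefl v).trans (by rw [hL]),
      mul_nonsing_inv_cancel_left _ _ hA]
  rw [hB, eval_charpoly_mul_one_sub_vecMulVec _ _ _ (isUnit_iff_ne_zero.2 hz),
    mul_div_cancel_left₀ _ hz, hL]

/-- In a hypergeometric group ⟨A, B⟩ with invariant Hermitian form (·,·),
if C = A⁻¹B is the complex reflection C v = v − ζ(v,r)r with C r = c r, c ≠ 1 and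
ζ = (1−c)/(r,r), then ψ(z)/φ(z) = 1 + ζ·((zI − A)⁻¹ A r, r) as rational functions. -/
theorem stmt_12 (n : ℕ) (A B : Matrix (Fin n) (Fin n) ℂ)
    (hA : IsUnit A.det) (hB : IsUnit B.det) (hrank : (A - B).rank = 1)
    (h : (Fin n → ℂ) → (Fin n → ℂ) → ℂ)
    (hadd1 : ∀ u u' v, h (u + u') v = h u v + h u' v)
    (hsmul1 : ∀ (a : ℂ) (u v), h (a • u) v = a * h u v)
    (hherm : ∀ u v, h u v = starRingEnd ℂ (h v u))
    (hnd : ∀ v, (∀ u, h u v = 0) → v = 0)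
    (hAinv : ∀ u v, h (A.mulVec u) (A.mulVec v) = h u v)
    (hBinv : ∀ u v, h (B.mulVec u) (B.mulVec v) = h u v)
    (r : Fin n → ℂ) (hr : r ≠ 0) (c : ℂ) (hc : c ≠ 1)
    (heig : (A⁻¹ * B).mulVec r = c • r)
    (hrr : h r r ≠ 0)
    (ζ : ℂ) (hζ : ζ = (1 - c) / h r r)
    (hrefl : ∀ v, (A⁻¹ * B).mulVec v = v - (ζ * h v r) • r) :
    ∀ z : ℂ, A.charpoly.eval z ≠ 0 →
      B.charpoly.eval z / A.charpoly.eval z =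
        1 + ζ * h ((z • (1 : Matrix (Fin n) (Fin n) ℂ) - A)⁻¹.mulVec (A.mulVec r)) r :=
  stmt_12_general n A B hA h hadd1 hsmul1 r ζ hrefl
end

section
/- With A-basis {A^{i−1} r} of the hypergeometric lattice L(φ, ψ), the Gram matrix entries are (A^{i−1} r, A^{j−1} r) = ξ_{|i−j|}, where ξ_0 = 2 and the ξ_i ∈ ℤ are defined by the expansion ψ(z)/φ(z) = 1 + Σ_{i≥1} ξ_i z^{−i} at z = ∞. -/
noncomputable def companion (n : ℕ) (f : Polynomial ℤ) : Matrix (Fin n) (Fin n) ℚ :=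
  Matrix.of fun i j =>
    (if (i : ℕ) = (j : ℕ) + 1 then 1 else 0) +
      (if (j : ℕ) = n - 1 then -((f.coeff (i : ℕ) : ℤ) : ℚ) else 0)

/-!
Let `A`, `B` be the companion matrices of `φ`, `ψ`. They differ only in the last column:
`B v = A v - v_last • (ψ - φ)`. Since `B r = -A r`, invariance of the form under `A` and `B`
gives `2 (v, r) = v_last · (ψ - φ, A r)`, so pairing with `r` is a multiple of the last
coordinate, and `(r, r) = 2` fixes the multiple: `(A^(k+1) r, r)` is the last coordinate of
`A^k (ψ - φ)`. As `A` is multiplication by `z` on `ℚ[z]/(φ)` in the basis `1, z, …, z^(2N-1)`,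
the last coordinates of `A^k v` are the coefficients of `v(z)/φ(z)` at `z = ∞`; for `v = ψ - φ`
this is `ψ/φ - 1`. Invariance under `A` reduces `(A^i r, A^j r)` to `(A^|i-j| r, r)`.
-/

open PowerSeries
open scoped Matrix

lemma Matrix.mulVec_eq_neg_of_inv_mul_mulVec_eq_neg {ι K : Type*} [Fintype ι] [DecidableEq ι]
    [CommRing K] {A B : Matrix ι ι K} {r : ι → K} (hr : r ≠ 0) (h : (A⁻¹ * B) *ᵥ r = -r) :
    B *ᵥ r = -(A *ᵥ r) := by
  by_cases hA : IsUnit A.det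
  · calc B *ᵥ r = A *ᵥ ((A⁻¹ * B) *ᵥ r) := by
          rw [Matrix.mulVec_mulVec, ← mul_assoc, Matrix.mul_nonsing_inv A hA, one_mul]
      _ = -(A *ᵥ r) := by rw [h, Matrix.mulVec_neg]
  · rw [Matrix.nonsing_inv_apply_not_isUnit A hA, zero_mul, Matrix.zero_mulVec,
      eq_comm, neg_eq_zero] at h
    exact absurd h hr

section Reflection

variable {K M : Type*} [Field K] [AddCommGroup M] [Module K M]
  {Bl : LinearMap.BilinForm K M} {A B : M →ₗ[K] M} {ℓ : M →ₗ[K] K} {u r : M}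

lemma two_mul_bilin_apply_eq (hB : ∀ v, B v = A v - ℓ v • u) (hA : Bl.IsOrthogonal A)
    (hBo : Bl.IsOrthogonal B) (hBr : B r = -A r) (v : M) :
    2 * Bl v r = ℓ v * Bl u (A r) := by
  have h := hBo v r
  rw [hB, hBr] at h
  simp only [map_sub, map_smul, map_neg, LinearMap.sub_apply, LinearMap.smul_apply,
    smul_eq_mul] at h
  linear_combination -h - hA v r

lemma bilin_pow_succ_apply_eq [CharZero K] (hB : ∀ v, B v = A v - ℓ v • u)
    (hA : Bl.IsOrthogonal A) (hBo : Bl.IsOrthogonal B) (hBr : B r = -A r) (hr : Bl r r = 2)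
    (k : ℕ) : Bl ((A ^ (k + 1)) r) r = ℓ ((A ^ k) u) := by
  have hAr : (2 : K) • A r = ℓ r • u := by
    have h := hB r
    rw [hBr] at h
    linear_combination (norm := module) -h
  have hℓ : 2 * ℓ ((A ^ (k + 1)) r) = ℓ r * ℓ ((A ^ k) u) := by
    rw [pow_succ, Module.End.mul_apply, ← smul_eq_mul, ← map_smul, ← map_smul, hAr, map_smul,
      map_smul, smul_eq_mul]
  have hr4 : ℓ r * Bl u (A r) = 4 := by
    rw [← two_mul_bilin_apply_eq hB hA hBo hBr, hr]; norm_num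
  have h := two_mul_bilin_apply_eq hB hA hBo hBr ((A ^ (k + 1)) r)
  linear_combination (2 * h + Bl u (A r) * hℓ + ℓ ((A ^ k) u) * hr4) / 4

lemma bilin_pow_add_apply_pow_apply (hA : Bl.IsOrthogonal A) (j k : ℕ) :
    Bl ((A ^ (j + k)) r) ((A ^ j) r) = Bl ((A ^ k) r) r := by
  induction j with
  | zero => simp
  | succ j ih =>
    rw [Nat.add_right_comm, pow_succ', pow_succ', Module.End.mul_apply, Module.End.mul_apply,
      hA, ih]

lemma bilin_pow_apply_pow_apply_eq (hBl : Bl.IsSymm) (hA : Bl.IsOrthogonal A) {g : ℕ → K}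
    (hg : ∀ k, Bl ((A ^ k) r) r = g k) (i j : ℕ) :
    Bl ((A ^ i) r) ((A ^ j) r) = g (max i j - min i j) := by
  rcases le_total j i with h | h
  · obtain ⟨k, rfl⟩ := Nat.exists_eq_add_of_le h
    rw [bilin_pow_add_apply_pow_apply hA, hg, max_eq_left h, min_eq_right h,
      Nat.add_sub_cancel_left]
  · obtain ⟨k, rfl⟩ := Nat.exists_eq_add_of_le h
    rw [max_eq_right h, min_eq_left h, Nat.add_sub_cancel_left, ← hg,
      ← bilin_pow_add_apply_pow_apply hA i k]
    exact (hBl.eq _ _).symm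

end Reflection

section Companion

variable {n : ℕ} (f : Polynomial ℤ)

lemma companion_mulVec_apply (v : Fin (n + 1) → ℚ) (i : Fin (n + 1)) :
    (companion (n + 1) f *ᵥ v) i =
      (if h : (i : ℕ) = 0 then 0 else v ⟨i - 1, by omega⟩) - f.coeff i * v (Fin.last n) := by
  have hlast : ∀ j : Fin (n + 1), (j : ℕ) = n + 1 - 1 ↔ j = Fin.last n := fun j => by
    simp [Fin.ext_iff]
  simp only [companion, Matrix.mulVec, dotProduct, Matrix.of_apply, add_mul, ite_mul, one_mul,
    zero_mul, Finset.sum_add_distrib, hlast, Finset.sum_ite_eq', Finset.mem_univ, if_true]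
  split_ifs with h
  · simp [Finset.sum_eq_zero, h]
  · rw [Finset.sum_eq_single ⟨i - 1, by omega⟩
      (fun j _ hj => if_neg fun hij => hj (by ext; simp; omega)) (by simp), if_pos (by simp; omega)]
    ring

noncomputable def reverseSeries : ℚ⟦X⟧ := ((f.map (Int.castRingHom ℚ)).reverse : ℚ⟦X⟧)

/-- `X^n v(1/X)` for `v(z) = Σ vᵢ zⁱ`, i.e. `Σ_{j ≤ n} v_{n-j} Xʲ`. -/
noncomputable def reverseSeriesOfVec (v : Fin (n + 1) → ℚ) : ℚ⟦X⟧ :=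
  mk fun j => if h : j ≤ n then v ⟨n - j, by omega⟩ else 0

variable {f}

lemma coeff_reverseSeries {d : ℕ} (hd : f.natDegree = d) (j : ℕ) :
    coeff j (reverseSeries f) = if j ≤ d then (f.coeff (d - j) : ℚ) else 0 := by
  rw [reverseSeries, Polynomial.coeff_coe, Polynomial.coeff_reverse,
    Polynomial.natDegree_map_eq_of_injective (RingHom.injective_int _), hd]
  split_ifs with h
  · simp [Polynomial.revAt_le h]
  · rw [Polynomial.revAt_eq_self_of_lt (by omega), Polynomial.coeff_map,
      Polynomial.coeff_eq_zero_of_natDegree_lt (by omega), map_zero]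

lemma constantCoeff_reverseSeries (hf : f.Monic) : constantCoeff (reverseSeries f) = 1 := by
  rw [← coeff_zero_eq_constantCoeff_apply, coeff_reverseSeries rfl, if_pos (Nat.zero_le _),
    Nat.sub_zero, hf.coeff_natDegree, Int.cast_one]

lemma reverseSeriesOfVec_eq (hf : f.Monic) (hd : f.natDegree = n + 1) (v : Fin (n + 1) → ℚ) :
    reverseSeriesOfVec v =
      C (v (Fin.last n)) * reverseSeries f + X * reverseSeriesOfVec (companion (n + 1) f *ᵥ v) := by
  ext (_ | j)
  · simp [reverseSeriesOfVec, constantCoeff_reverseSeries hf, Fin.last]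
  · simp only [reverseSeriesOfVec, map_add, coeff_C_mul, coeff_succ_X_mul, coeff_mk,
      coeff_reverseSeries hd, companion_mulVec_apply, Nat.sub_sub, Nat.add_sub_add_right]
    split_ifs <;> first | omega | ring

theorem reverseSeries_mul_mk_companion_pow (hf : f.Monic) (hd : f.natDegree = n + 1)
    (v : Fin (n + 1) → ℚ) :
    reverseSeries f * mk (fun k => (companion (n + 1) f ^ k *ᵥ v) (Fin.last n)) =
      reverseSeriesOfVec v := by
  set D : (Fin (n + 1) → ℚ) → ℚ⟦X⟧ := fun v =>
    reverseSeries f * mk (fun k => (companion (n + 1) f ^ k *ᵥ v) (Fin.last n)) -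
      reverseSeriesOfVec v
  have hD : ∀ v, D v = X * D (companion (n + 1) f *ᵥ v) := fun v => by
    have hmk : mk (fun k => (companion (n + 1) f ^ k *ᵥ v) (Fin.last n)) =
        X * mk (fun k => (companion (n + 1) f ^ k *ᵥ (companion (n + 1) f *ᵥ v)) (Fin.last n)) +
          C (v (Fin.last n)) := by
      rw [eq_X_mul_shift_add_const (mk _)]
      simp [pow_succ, Matrix.mulVec_mulVec]
    simp only [D]
    rw [hmk, reverseSeriesOfVec_eq hf hd v]
    ring
  suffices ∀ m v, coeff m (D v) = 0 from
    sub_eq_zero.mp <| ext fun m => by rw [map_zero]; exact this m v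
  intro m
  induction m with
  | zero => intro v; rw [hD, coeff_zero_X_mul]
  | succ m ih => intro v; rw [hD, coeff_succ_X_mul, ih]

lemma companion_mulVec_eq_sub (g : Polynomial ℤ) (v : Fin (n + 1) → ℚ) :
    companion (n + 1) g *ᵥ v =
      companion (n + 1) f *ᵥ v -
        v (Fin.last n) • fun i : Fin (n + 1) => ((g - f).coeff i : ℚ) := by
  ext i
  simp only [companion_mulVec_apply, Pi.sub_apply, Pi.smul_apply, smul_eq_mul,
    Polynomial.coeff_sub, Int.cast_sub]
  ring

lemma X_mul_reverseSeriesOfVec_sub {g : Polynomial ℤ} (hf : f.Monic) (hg : g.Monic)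
    (hfd : f.natDegree = n + 1) (hgd : g.natDegree = n + 1) :
    X * reverseSeriesOfVec (fun i : Fin (n + 1) => ((g - f).coeff i : ℚ)) =
      reverseSeries g - reverseSeries f := by
  ext (_ | j)
  · rw [coeff_zero_X_mul, map_sub, coeff_zero_eq_constantCoeff_apply,
      coeff_zero_eq_constantCoeff_apply, constantCoeff_reverseSeries hf,
      constantCoeff_reverseSeries hg, sub_self]
  · simp only [reverseSeriesOfVec, coeff_succ_X_mul, coeff_mk, map_sub, coeff_reverseSeries hfd,
      coeff_reverseSeries hgd, Polynomial.coeff_sub, Int.cast_sub, Nat.add_sub_add_right]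
    split_ifs <;> first | omega | ring

lemma coeff_succ_reverseSeries_mul_inv {g : Polynomial ℤ} (hf : f.Monic) (hg : g.Monic)
    (hfd : f.natDegree = n + 1) (hgd : g.natDegree = n + 1) (k : ℕ) :
    coeff (k + 1) (reverseSeries g * (reverseSeries f)⁻¹) =
      (companion (n + 1) f ^ k *ᵥ fun i : Fin (n + 1) => ((g - f).coeff i : ℚ)) (Fin.last n) := by
  set s := fun k => (companion (n + 1) f ^ k *ᵥ fun i : Fin (n + 1) => ((g - f).coeff i : ℚ))
    (Fin.last n)
  have h : 1 + X * mk s = reverseSeries g * (reverseSeries f)⁻¹ := by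
    rw [eq_mul_inv_iff_mul_eq (by rw [constantCoeff_reverseSeries hf]; exact one_ne_zero),
      add_mul, one_mul, mul_assoc, mul_comm (mk s), reverseSeries_mul_mk_companion_pow hf hfd,
      X_mul_reverseSeriesOfVec_sub hf hg hfd hgd, add_sub_cancel]
  rw [← h, map_add, coeff_succ_X_mul, coeff_mk, coeff_one, if_neg k.succ_ne_zero, zero_add]

end Companion

theorem stmt_15_general (N : ℕ) (hN : 0 < N) (φ ψ : Polynomial ℤ)
    (hφm : φ.Monic) (hψm : ψ.Monic)
    (hφd : φ.natDegree = 2 * N) (hψd : ψ.natDegree = 2 * N)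
    (r : Fin (2 * N) → ℚ) (hr : r ≠ 0)
    (hrefl : ((companion (2 * N) φ)⁻¹ * companion (2 * N) ψ).mulVec r = -r)
    (Bl : (Fin (2 * N) → ℚ) →ₗ[ℚ] (Fin (2 * N) → ℚ) →ₗ[ℚ] ℚ)
    (hsymm : ∀ u v, Bl u v = Bl v u)
    (hAinv : ∀ u v, Bl ((companion (2 * N) φ).mulVec u) ((companion (2 * N) φ).mulVec v)
        = Bl u v)
    (hBinv : ∀ u v, Bl ((companion (2 * N) ψ).mulVec u) ((companion (2 * N) ψ).mulVec v)
        = Bl u v)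
    (hnorm : Bl r r = 2)
    (ξ : ℕ → ℤ) (hξ0 : ξ 0 = 2)
    (hξ : ∀ i : ℕ, 1 ≤ i →
      PowerSeries.coeff (R := ℚ) i (((ψ.map (Int.castRingHom ℚ)).reverse : PowerSeries ℚ) *
        (((φ.map (Int.castRingHom ℚ)).reverse : PowerSeries ℚ))⁻¹) = (ξ i : ℚ)) :
    ∀ i j : ℕ,
      Bl (((companion (2 * N) φ) ^ i).mulVec r) (((companion (2 * N) φ) ^ j).mulVec r)
        = (ξ (max i j - min i j) : ℚ) := by
  obtain ⟨n, hn⟩ : ∃ n, 2 * N = n + 1 := ⟨2 * N - 1, by omega⟩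
  generalize 2 * N = m at *
  subst hn
  set A := Matrix.toLin' (companion (n + 1) φ)
  have hpow : ∀ k v, (A ^ k) v = companion (n + 1) φ ^ k *ᵥ v := fun k v => by
    rw [← Matrix.toLin'_pow, Matrix.toLin'_apply]
  have hA : Bl.IsOrthogonal A := fun v w => hAinv v w
  have hB : Bl.IsOrthogonal (Matrix.toLin' (companion (n + 1) ψ)) := fun v w => hBinv v w
  have hBr := Matrix.mulVec_eq_neg_of_inv_mul_mulVec_eq_neg hr hrefl
  have hgram : ∀ k, Bl ((A ^ k) r) r = ξ k := by
    rintro (_ | k)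
    · simpa [hξ0] using hnorm
    · rw [bilin_pow_succ_apply_eq (ℓ := LinearMap.proj (Fin.last n))
        (fun v => companion_mulVec_eq_sub (f := φ) ψ v) hA hB hBr hnorm, LinearMap.proj_apply,
        hpow, ← coeff_succ_reverseSeries_mul_inv hφm hψm hφd hψd]
      exact hξ (k + 1) le_add_self
  intro i j
  simpa only [hpow] using bilin_pow_apply_pow_apply_eq ⟨fun v w => hsymm v w⟩ hA hgram i j

/-- With the A-basis {A^{i} r} of the hypergeometric lattice L(φ, ψ), the
Gram matrix entries satisfy (A^{i}r, A^{j}r) = ξ_{|i−j|}, where ξ₀ = 2 and the integers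
ξᵢ are the Taylor coefficients of ψ(z)/φ(z) = 1 + Σ_{i≥1} ξᵢ z^{−i} at z = ∞
(equivalently the coefficients of the power series ψ*(u)/φ*(u) in u = 1/z, where
φ* and ψ* are the reversed polynomials). -/
theorem stmt_15 (N : ℕ) (hN : 0 < N) (φ ψ : Polynomial ℤ)
    (hφm : φ.Monic) (hψm : ψ.Monic)
    (hφd : φ.natDegree = 2 * N) (hψd : ψ.natDegree = 2 * N)
    (hcop : IsCoprime (φ.map (Int.castRingHom ℚ)) (ψ.map (Int.castRingHom ℚ)))
    (hφap : ∀ z : ℂ, z ≠ 0 →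
      z ^ (2 * N) * Polynomial.aeval z⁻¹ φ = -(Polynomial.aeval z φ))
    (hψpal : ∀ z : ℂ, z ≠ 0 →
      z ^ (2 * N) * Polynomial.aeval z⁻¹ ψ = Polynomial.aeval z ψ)
    (r : Fin (2 * N) → ℚ) (hr : r ≠ 0)
    (hrefl : ((companion (2 * N) φ)⁻¹ * companion (2 * N) ψ).mulVec r = -r)
    (Bl : (Fin (2 * N) → ℚ) →ₗ[ℚ] (Fin (2 * N) → ℚ) →ₗ[ℚ] ℚ)
    (hsymm : ∀ u v, Bl u v = Bl v u)
    (hAinv : ∀ u v, Bl ((companion (2 * N) φ).mulVec u) ((companion (2 * N) φ).mulVec v)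
        = Bl u v)
    (hBinv : ∀ u v, Bl ((companion (2 * N) ψ).mulVec u) ((companion (2 * N) ψ).mulVec v)
        = Bl u v)
    (hnd : ∀ v, (∀ u, Bl u v = 0) → v = 0)
    (hnorm : Bl r r = 2)
    (ξ : ℕ → ℤ) (hξ0 : ξ 0 = 2)
    (hξ : ∀ i : ℕ, 1 ≤ i →
      PowerSeries.coeff (R := ℚ) i (((ψ.map (Int.castRingHom ℚ)).reverse : PowerSeries ℚ) *
        (((φ.map (Int.castRingHom ℚ)).reverse : PowerSeries ℚ))⁻¹) = (ξ i : ℚ)) :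
    ∀ i j : ℕ,
      Bl (((companion (2 * N) φ) ^ i).mulVec r) (((companion (2 * N) φ) ^ j).mulVec r)
        = (ξ (max i j - min i j) : ℚ) :=
  stmt_15_general N hN φ ψ hφm hψm hφd hψd r hr hrefl Bl hsymm hAinv hBinv hnorm ξ hξ0 hξ
end

section
/- Let F be an automorphism of an even lattice L preserving a nondegenerate Hermitian form on L⊗ℂ, and let λ ∈ S¹ be an eigenvalue of F such that F admits a cyclic vector. If the generalized eigenspace E(λ) has dimension m(λ) ≥ 2, then the eigenspace V(λ) = ker(F − λ) ∩ E(λ) is one-dimensional and the Hermitian form vanishes identically on V(λ). -/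
/-! If `r` is a cyclic vector of `F`, the identity `F ^ (i + 1) r = (F - λ) (F ^ i r) + λ • F ^ i r`
shows that `range (F - λ)` and `r` span everything, so `ker (F - λ)` has dimension at most one.
Since the generalized eigenspace is strictly larger than the eigenspace, there is a Jordan chain
`F u = λ u`, `F w = λ w + u` with `u ≠ 0`; invariance gives
`h(u, w) = h(Fu, Fw) = |λ|² h(u, w) + λ h(u, u)`, so `h(u, u) = 0` as `|λ| = 1`.
The eigenspace is the line through `u`, hence `h` vanishes on it. -/

open Module Submodule

namespace Module.End

variable {K V : Type*} [Field K] [AddCommGroup V] [Module K V]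

theorem finrank_eigenspace_le_one_of_span_pow_apply_eq_top [FiniteDimensional K V]
    (T : End K V) {r : V} (hr : span K (Set.range fun i : ℕ => (T ^ i) r) = ⊤) (μ : K) :
    finrank K (T.eigenspace μ) ≤ 1 := by
  rw [eigenspace_def]
  set S := T - μ • 1
  have hpow : ∀ i : ℕ, (T ^ i) r ∈ LinearMap.range S ⊔ K ∙ r := by
    intro i
    induction i with
    | zero => exact mem_sup_right (mem_span_singleton_self r)
    | succ i ih =>
      have hstep : (T ^ (i + 1)) r = S ((T ^ i) r) + μ • (T ^ i) r := by
        simp [S, pow_succ', mul_apply]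
      rw [hstep]
      exact add_mem (mem_sup_left (LinearMap.mem_range_self S _)) (smul_mem _ μ ih)
  have htop : LinearMap.range S ⊔ K ∙ r = ⊤ :=
    top_unique (hr ▸ span_le.mpr (Set.range_subset_iff.mpr hpow))
  have hsup := finrank_add_le_finrank_add_finrank (LinearMap.range S) (K ∙ r)
  have hline : finrank K (K ∙ r) ≤ 1 := by simpa using finrank_span_le_card ({r} : Set V)
  have hrank := LinearMap.finrank_range_add_finrank_ker S
  rw [htop, finrank_top] at hsup
  omega

variable {R M : Type*} [CommRing R] [AddCommGroup M] [Module R M]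

theorem exists_hasEigenvector_and_apply_eq_smul_add {T : End R M} {μ : R}
    (h : ¬ T.maxGenEigenspace μ ≤ T.eigenspace μ) :
    ∃ u w, T.HasEigenvector μ u ∧ T w = μ • w + u := by
  set S := T - μ • 1
  have hmem : ∀ x, x ∈ T.eigenspace μ ↔ S x = 0 := fun x => by
    rw [eigenspace_def, LinearMap.mem_ker]
  suffices ∀ (k : ℕ) (w : M), (S ^ k) w = 0 → S w ≠ 0 → ∃ w', S (S w') = 0 ∧ S w' ≠ 0 by
    obtain ⟨w, hwmax, hweig⟩ := SetLike.not_le_iff_exists.mp h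
    obtain ⟨k, hk⟩ := (mem_maxGenEigenspace T μ w).mp hwmax
    obtain ⟨w', hSS, hS⟩ := this k w hk (mt (hmem w).mpr hweig)
    refine ⟨S w', w', ⟨(hmem _).mpr hSS, hS⟩, ?_⟩
    simp [S]
  intro k
  induction k with
  | zero => intro w hw hSw; simp_all
  | succ k ih =>
    intro w hw hSw
    by_cases hSS : S (S w) = 0
    · exact ⟨w, hSS, hSw⟩
    · exact ih (S w) (by rwa [← mul_apply, ← pow_succ]) hSS

end Module.End

namespace LinearMap

variable {K V : Type*} [Field K] [AddCommGroup V] [Module K V] {σ : K →+* K}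

theorem apply_self_eq_zero_of_apply_eq_smul_add (B : V →ₗ[K] V →ₛₗ[σ] K) {F : V →ₗ[K] V}
    (hB : ∀ x y, B (F x) (F y) = B x y) {μ : K} (hμ : μ * σ μ = 1) {u w : V}
    (hu : F u = μ • u) (hw : F w = μ • w + u) : B u u = 0 := by
  have hμ0 : μ ≠ 0 := left_ne_zero_of_mul_eq_one hμ
  have key : B u w = B u w + μ * B u u := by
    calc B u w = B (F u) (F w) := (hB u w).symm
      _ = μ * σ μ * B u w + μ * B u u := by
        rw [hu, hw]
        simp only [map_smul, map_smulₛₗ, map_add, smul_apply, smul_eq_mul]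
        ring
      _ = B u w + μ * B u u := by rw [hμ, one_mul]
  exact (mul_eq_zero.mp (left_eq_add.mp key)).resolve_left hμ0

theorem apply_eq_zero_of_finrank_eq_one (B : V →ₗ[K] V →ₛₗ[σ] K) {p : Submodule K V}
    (hp : finrank K p = 1) {u : V} (hup : u ∈ p) (hu : u ≠ 0) (huu : B u u = 0) :
    ∀ v ∈ p, ∀ v' ∈ p, B v v' = 0 := by
  have : FiniteDimensional K p := Module.finite_of_finrank_eq_succ hp
  have hpu : p = K ∙ u := (eq_of_le_of_finrank_eq ((span_singleton_le_iff_mem u p).mpr hup)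
    (by rw [finrank_span_singleton hu, hp])).symm
  rintro _ hv _ hv'
  rw [hpu, mem_span_singleton] at hv hv'
  obtain ⟨a, rfl⟩ := hv
  obtain ⟨a', rfl⟩ := hv'
  simp [huu]

end LinearMap

theorem stmt_16_general (n : ℕ)
    (Fc : Matrix (Fin n) (Fin n) ℂ)
    (h : (Fin n → ℂ) → (Fin n → ℂ) → ℂ)
    (hadd1 : ∀ u u' v, h (u + u') v = h u v + h u' v)
    (hsmul1 : ∀ (a : ℂ) (u v), h (a • u) v = a * h u v)
    (hherm : ∀ u v, h u v = starRingEnd ℂ (h v u))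
    (hinv : ∀ u v, h (Fc.mulVec u) (Fc.mulVec v) = h u v)
    (lam : ℂ) (hlam : ‖lam‖ = 1)
    (r : Fin n → ℂ)
    (hcyc : Submodule.span ℂ (Set.range fun i : Fin n => (Fc ^ (i : ℕ)).mulVec r) = ⊤)
    (hdim : 2 ≤ Module.finrank ℂ
        (Module.End.maxGenEigenspace (Matrix.mulVecLin Fc) lam)) :
    Module.finrank ℂ (Module.End.eigenspace (Matrix.mulVecLin Fc) lam) = 1 ∧
    ∀ v ∈ Module.End.eigenspace (Matrix.mulVecLin Fc) lam,
      ∀ v' ∈ Module.End.eigenspace (Matrix.mulVecLin Fc) lam, h v v' = 0 := by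
  set T : End ℂ (Fin n → ℂ) := Fc.mulVecLin
  have hcycT : span ℂ (Set.range fun i : ℕ => (T ^ i) r) = ⊤ := by
    refine top_unique (hcyc ▸ span_mono ?_)
    rintro _ ⟨i, rfl⟩
    refine ⟨i, ?_⟩
    change (Fc.mulVecLin ^ (i : ℕ)) r = (Fc ^ (i : ℕ)).mulVec r
    rw [← Matrix.toLin'_apply', ← Matrix.toLin'_pow, Matrix.toLin'_apply]
  have hle := T.finrank_eigenspace_le_one_of_span_pow_apply_eq_top hcycT lam
  obtain ⟨u, w, hu, hw⟩ := T.exists_hasEigenvector_and_apply_eq_smul_add (μ := lam) fun hmax => by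
    have := finrank_mono hmax
    omega
  have hrank : finrank ℂ (T.eigenspace lam) = 1 :=
    le_antisymm hle (one_le_finrank_iff.mpr ((Submodule.ne_bot_iff _).mpr ⟨u, hu.1, hu.2⟩))
  let B : (Fin n → ℂ) →ₗ[ℂ] (Fin n → ℂ) →ₗ⋆[ℂ] ℂ := LinearMap.mk₂'ₛₗ _ _ h hadd1 hsmul1
    (fun u v v' => by rw [hherm, hadd1, map_add, ← hherm, ← hherm])
    (fun a u v => by rw [hherm, hsmul1, map_mul, ← hherm]; rfl)
  have hlam' : lam * starRingEnd ℂ lam = 1 := by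
    rw [Complex.mul_conj', hlam]
    norm_num
  exact ⟨hrank, LinearMap.apply_eq_zero_of_finrank_eq_one B hrank hu.1 hu.2
    (LinearMap.apply_self_eq_zero_of_apply_eq_smul_add B hinv hlam' hu.apply_eq_smul hw)⟩

/-- Let F be an automorphism of an even lattice preserving a nondegenerate
Hermitian form on L⊗ℂ, λ ∈ S¹ an eigenvalue of F, and suppose F admits a cyclic vector.
If the generalized eigenspace E(λ) has dimension ≥ 2, then the eigenspace V(λ) is
one-dimensional and the Hermitian form vanishes identically on V(λ). -/
theorem stmt_16 (n : ℕ) (M : Matrix (Fin n) (Fin n) ℤ) (hM : IsUnit M.det)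
    (Bil : Matrix (Fin n) (Fin n) ℤ) (hBsymm : Bil.IsSymm) (hBnd : Bil.det ≠ 0)
    (hBeven : ∀ v : Fin n → ℤ, ∃ m : ℤ, dotProduct v (Bil.mulVec v) = 2 * m)
    (hMB : M.transpose * Bil * M = Bil)
    (Fc : Matrix (Fin n) (Fin n) ℂ) (hFc : Fc = M.map (Int.cast : ℤ → ℂ))
    (h : (Fin n → ℂ) → (Fin n → ℂ) → ℂ)
    (hadd1 : ∀ u u' v, h (u + u') v = h u v + h u' v)
    (hsmul1 : ∀ (a : ℂ) (u v), h (a • u) v = a * h u v)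
    (hherm : ∀ u v, h u v = starRingEnd ℂ (h v u))
    (hnd : ∀ v, (∀ u, h u v = 0) → v = 0)
    (hinv : ∀ u v, h (Fc.mulVec u) (Fc.mulVec v) = h u v)
    (lam : ℂ) (hlam : ‖lam‖ = 1)
    (heig : Module.End.HasEigenvalue (Matrix.mulVecLin Fc) lam)
    (r : Fin n → ℂ)
    (hcyc : Submodule.span ℂ (Set.range fun i : Fin n => (Fc ^ (i : ℕ)).mulVec r) = ⊤)
    (hdim : 2 ≤ Module.finrank ℂ
        (Module.End.maxGenEigenspace (Matrix.mulVecLin Fc) lam)) :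
    Module.finrank ℂ (Module.End.eigenspace (Matrix.mulVecLin Fc) lam) = 1 ∧
    ∀ v ∈ Module.End.eigenspace (Matrix.mulVecLin Fc) lam,
      ∀ v' ∈ Module.End.eigenspace (Matrix.mulVecLin Fc) lam, h v v' = 0 :=
  stmt_16_general n Fc h hadd1 hsmul1 hherm hinv lam hlam r hcyc hdim
end
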